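/- Let X and Y be smooth vector fields on B with horizontal lifts X_H and Y_H on M, and let Z be a smooth vertical vector field on M. Then 2·⟪∇^M_{X_H} Y_H, Z⟫ = ⟪[X_H, Y_H], Z⟫ as functions on M. -/

import Mathlib

open Manifold

noncomputable section

/-- A vector field on a manifold is smooth if the corresponding section of the
tangent bundle is smooth. -/
def IsSmoothVF {E : Type*} [NormedAddCommGroup E] [NormedSpace ℝ E]
    {H : Type*} [TopologicalSpace H] (I : ModelWithCorners ℝ E H)
    {M : Type*} [TopologicalSpace M] [ChartedSpace H M] [IsManifold I ((⊤ : ℕ∞) : WithTop ℕ∞) M]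
    (X : ∀ m : M, TangentSpace I m) : Prop :=
  ContMDiff I I.tangent (⊤ : ℕ∞) (fun m => (⟨m, X m⟩ : TangentBundle I M))

/-- The action of a vector field on a function: `X(f)(m) := df_m(X_m)`. -/
def vfApply {E : Type*} [NormedAddCommGroup E] [NormedSpace ℝ E]
    {H : Type*} [TopologicalSpace H] (I : ModelWithCorners ℝ E H)
    {M : Type*} [TopologicalSpace M] [ChartedSpace H M]
    (X : ∀ m : M, TangentSpace I m) (f : M → ℝ) : M → ℝ :=
  fun m => mfderiv I 𝓘(ℝ, ℝ) f m (X m)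

/-- A Riemannian metric: a smoothly varying family of real inner products on the
tangent spaces. -/
structure RiemannianMetric {E : Type*} [NormedAddCommGroup E] [NormedSpace ℝ E]
    {H : Type*} [TopologicalSpace H] (I : ModelWithCorners ℝ E H)
    (M : Type*) [TopologicalSpace M] [ChartedSpace H M] [IsManifold I ((⊤ : ℕ∞) : WithTop ℕ∞) M] where
  g : ∀ m : M, TangentSpace I m → TangentSpace I m → ℝ
  symm : ∀ m u v, g m u v = g m v u
  add_left : ∀ m u v w, g m (u + v) w = g m u w + g m v w
  smul_left : ∀ (m) (c : ℝ) (u w), g m (c • u) w = c * g m u w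
  posdef : ∀ m v, v ≠ 0 → 0 < g m v v
  smooth : ∀ X Y : ∀ m : M, TangentSpace I m, IsSmoothVF I X → IsSmoothVF I Y →
    ContMDiff I 𝓘(ℝ, ℝ) (⊤ : ℕ∞) (fun m => g m (X m) (Y m))

/-- The Lie bracket of smooth vector fields, characterized by
`[X,Y](f) = X(Y(f)) - Y(X(f))` on smooth functions. -/
structure LieBracketData {E : Type*} [NormedAddCommGroup E] [NormedSpace ℝ E]
    {H : Type*} [TopologicalSpace H] (I : ModelWithCorners ℝ E H)
    (M : Type*) [TopologicalSpace M] [ChartedSpace H M] [IsManifold I ((⊤ : ℕ∞) : WithTop ℕ∞) M] where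
  bracket : (∀ m : M, TangentSpace I m) → (∀ m : M, TangentSpace I m) →
    (∀ m : M, TangentSpace I m)
  smooth : ∀ X Y, IsSmoothVF I X → IsSmoothVF I Y → IsSmoothVF I (bracket X Y)
  apply_eq : ∀ X Y, IsSmoothVF I X → IsSmoothVF I Y →
    ∀ f : M → ℝ, ContMDiff I 𝓘(ℝ, ℝ) (⊤ : ℕ∞) f → ∀ m,
      vfApply I (bracket X Y) f m =
        vfApply I X (vfApply I Y f) m - vfApply I Y (vfApply I X f) m

/-- The Levi-Civita connection associated to a Riemannian metric: an ℝ-bilinear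
operator on smooth vector fields, `C^∞`-linear in the first slot, satisfying the
Leibniz rule, metric, and torsion-free. -/
structure LeviCivita {E : Type*} [NormedAddCommGroup E] [NormedSpace ℝ E]
    {H : Type*} [TopologicalSpace H] {I : ModelWithCorners ℝ E H}
    {M : Type*} [TopologicalSpace M] [ChartedSpace H M] [IsManifold I ((⊤ : ℕ∞) : WithTop ℕ∞) M]
    (gM : RiemannianMetric I M) (lie : LieBracketData I M) where
  cov : (∀ m : M, TangentSpace I m) → (∀ m : M, TangentSpace I m) →
    (∀ m : M, TangentSpace I m)
  smooth : ∀ X Y, IsSmoothVF I X → IsSmoothVF I Y → IsSmoothVF I (cov X Y)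
  add_left : ∀ X X' Y, IsSmoothVF I X → IsSmoothVF I X' → IsSmoothVF I Y → ∀ m,
    cov (fun m => X m + X' m) Y m = cov X Y m + cov X' Y m
  add_right : ∀ X Y Y', IsSmoothVF I X → IsSmoothVF I Y → IsSmoothVF I Y' → ∀ m,
    cov X (fun m => Y m + Y' m) m = cov X Y m + cov X Y' m
  smul_left : ∀ (c : ℝ) (X Y), IsSmoothVF I X → IsSmoothVF I Y → ∀ m,
    cov (fun m => c • X m) Y m = c • cov X Y m
  smul_right : ∀ (c : ℝ) (X Y), IsSmoothVF I X → IsSmoothVF I Y → ∀ m,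
    cov X (fun m => c • Y m) m = c • cov X Y m
  cinf_linear : ∀ (f : M → ℝ), ContMDiff I 𝓘(ℝ, ℝ) (⊤ : ℕ∞) f →
    ∀ X Y, IsSmoothVF I X → IsSmoothVF I Y → ∀ m,
      cov (fun m => f m • X m) Y m = f m • cov X Y m
  leibniz : ∀ (f : M → ℝ), ContMDiff I 𝓘(ℝ, ℝ) (⊤ : ℕ∞) f →
    ∀ X Y, IsSmoothVF I X → IsSmoothVF I Y → ∀ m,
      cov X (fun m => f m • Y m) m = vfApply I X f m • Y m + f m • cov X Y m
  metric : ∀ X Y Z, IsSmoothVF I X → IsSmoothVF I Y → IsSmoothVF I Z → ∀ m,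
    vfApply I X (fun m => gM.g m (Y m) (Z m)) m =
      gM.g m (cov X Y m) (Z m) + gM.g m (Y m) (cov X Z m)
  torsion_free : ∀ X Y, IsSmoothVF I X → IsSmoothVF I Y → ∀ m,
    cov X Y m - cov Y X m = lie.bracket X Y m

section Submersion

variable {EM : Type*} [NormedAddCommGroup EM] [NormedSpace ℝ EM]
  {HM : Type*} [TopologicalSpace HM] (IM : ModelWithCorners ℝ EM HM)
  {M : Type*} [TopologicalSpace M] [ChartedSpace HM M]
  {EB : Type*} [NormedAddCommGroup EB] [NormedSpace ℝ EB]
  {HB : Type*} [TopologicalSpace HB] (IB : ModelWithCorners ℝ EB HB)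
  {B : Type*} [TopologicalSpace B] [ChartedSpace HB B]

/-- A vector field on `M` is vertical when `dπ_m(X_m) = 0` for all `m`. -/
def IsVerticalVF (π : M → B) (X : ∀ m : M, TangentSpace IM m) : Prop :=
  ∀ m : M, mfderiv IM IB π m (X m) = 0

section
variable [IsManifold IM ((⊤ : ℕ∞) : WithTop ℕ∞) M]

/-- A vector field on `M` is horizontal when it is pointwise `g`-orthogonal to the
kernel of `dπ`. -/
def IsHorizontalVF (π : M → B) (gM : RiemannianMetric IM M)
    (X : ∀ m : M, TangentSpace IM m) : Prop :=
  ∀ (m : M) (u : TangentSpace IM m), mfderiv IM IB π m u = 0 → gM.g m (X m) u = 0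

/-- `π : M → B` is a Riemannian submersion: it is smooth, surjective, each
differential `dπ_m` is surjective and restricts to a linear isometry from
`(ker dπ_m)^⊥` onto `T_{π m} B`. -/
structure IsRiemannianSubmersion [IsManifold IB ((⊤ : ℕ∞) : WithTop ℕ∞) B] (π : M → B)
    (gM : RiemannianMetric IM M) (gB : RiemannianMetric IB B) : Prop where
  smooth : ContMDiff IM IB (⊤ : ℕ∞) π
  surj : Function.Surjective π
  dsurj : ∀ m : M, Function.Surjective (mfderiv IM IB π m)
  isometry : ∀ (m : M) (v w : TangentSpace IM m),
    (∀ u : TangentSpace IM m, mfderiv IM IB π m u = 0 → gM.g m v u = 0) →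
    (∀ u : TangentSpace IM m, mfderiv IM IB π m u = 0 → gM.g m w u = 0) →
    gB.g (π m) (mfderiv IM IB π m v) (mfderiv IM IB π m w) = gM.g m v w

/-- `YH` is the horizontal lift of the vector field `Y` on `B`: it is smooth,
horizontal and satisfies `dπ_m((Y_H)_m) = Y_{π m}` for all `m`. -/
def IsHorizontalLift (π : M → B) (gM : RiemannianMetric IM M)
    (Y : ∀ b : B, TangentSpace IB b) (YH : ∀ m : M, TangentSpace IM m) : Prop :=
  IsSmoothVF IM YH ∧ IsHorizontalVF IM IB π gM YH ∧
    ∀ m : M, mfderiv IM IB π m (YH m) = Y (π m)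

end

end Submersion

/-! The vertical component of `∇_{X_H} Y_H` is computed by a Koszul-type argument: metricity
and torsion-freeness move the derivative from `Y_H` onto `Z`, the brackets `[X_H, Z]` and
`[Y_H, Z]` are vertical because `X_H` and `Y_H` are `π`-related to `X` and `Y` while `Z` is
`π`-related to `0`, and the vertical field `Z` kills the function `⟪X_H, Y_H⟫ = ⟪X, Y⟫ ∘ π`.
Verticality of `[X_H, Z]` is tested on functions `f ∘ π`, which separate tangent vectors of
the compact base `B` by the Whitney embedding theorem. -/

section VectorField

variable {E : Type*} [NormedAddCommGroup E] [NormedSpace ℝ E]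
  {H : Type*} [TopologicalSpace H] {I : ModelWithCorners ℝ E H}
  {M : Type*} [TopologicalSpace M] [ChartedSpace H M]

theorem vfApply_of_forall_eq_zero (X : ∀ m : M, TangentSpace I m) {f : M → ℝ}
    (hf : ∀ m, f m = 0) (m : M) : vfApply I X f m = 0 := by
  rw [vfApply, show f = fun _ => 0 from funext hf, mfderiv_const]
  rfl

variable [IsManifold I ((⊤ : ℕ∞) : WithTop ℕ∞) M]

theorem eq_zero_of_forall_mfderiv_eq_zero [CompactSpace M] [T2Space M]
    [FiniteDimensional ℝ E] [I.Boundaryless] {m : M} {w : TangentSpace I m}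
    (h : ∀ f : M → ℝ, ContMDiff I 𝓘(ℝ, ℝ) (⊤ : ℕ∞) f → mfderiv I 𝓘(ℝ, ℝ) f m w = 0) :
    w = 0 := by
  obtain ⟨n, e, he, -, hinj⟩ := exists_embedding_euclidean_of_compact (I := I) (M := M)
  set v : EuclideanSpace ℝ (Fin n) := mfderiv I (𝓡 n) e m w
  -- test `w` against the smooth function `⟪v, e ·⟫`, whose derivative along `w` is `‖v‖²`
  have hv : inner ℝ v v = 0 := by
    have := h _ ((innerSL ℝ v).contMDiff.comp he)
    rwa [mfderiv_comp m (((innerSL ℝ v).contMDiff (n := 1)).mdifferentiableAt one_ne_zero)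
      (he.mdifferentiableAt (by simp)), ContinuousLinearMap.mfderiv_eq] at this
  apply hinj m
  rw [map_zero]
  exact inner_self_eq_zero.mp hv

theorem contMDiff_vfApply {X : ∀ m : M, TangentSpace I m} (hX : IsSmoothVF I X)
    {f : M → ℝ} (hf : ContMDiff I 𝓘(ℝ, ℝ) (⊤ : ℕ∞) f) :
    ContMDiff I 𝓘(ℝ, ℝ) (⊤ : ℕ∞) (vfApply I X f) := by
  have hdf : ContMDiff I (𝓘(ℝ, ℝ).prod 𝓘(ℝ, ℝ)) (⊤ : ℕ∞)
      (fun m => tangentMap I 𝓘(ℝ, ℝ) f ⟨m, X m⟩) :=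
    (hf.contMDiff_tangentMap (m := (⊤ : ℕ∞))
      (by rw [← WithTop.coe_one, ← WithTop.coe_add, top_add])).comp hX
  intro m₀
  -- `vfApply I X f` is the fibre coordinate of `df ∘ X` in the trivialization of `Tℝ`
  have h := ((Bundle.contMDiffAt_totalSpace
      (f := fun m => tangentMap I 𝓘(ℝ, ℝ) f ⟨m, X m⟩) (x₀ := m₀)).mp (hdf m₀)).2
  convert h using 1
  funext m
  simp only [TangentBundle.trivializationAt_apply, tangentMap, vfApply]
  norm_num [chartAt_self_eq]
  rfl

namespace RiemannianMetric

variable (g : RiemannianMetric I M) (m : M)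

theorem add_right (u v w : TangentSpace I m) : g.g m u (v + w) = g.g m u v + g.g m u w := by
  rw [g.symm, g.add_left, g.symm m v u, g.symm m w u]

theorem sub_left (u v w : TangentSpace I m) : g.g m (u - v) w = g.g m u w - g.g m v w := by
  rw [sub_eq_add_neg, ← neg_one_smul ℝ v, g.add_left, g.smul_left]
  ring

end RiemannianMetric

theorem LeviCivita.g_cov_eq_neg_of_orthogonal {gM : RiemannianMetric I M}
    {lie : LieBracketData I M} (cov : LeviCivita gM lie) {X Y Z : ∀ m : M, TangentSpace I m}
    (hX : IsSmoothVF I X) (hY : IsSmoothVF I Y) (hZ : IsSmoothVF I Z)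
    (hYZ : ∀ m, gM.g m (Y m) (Z m) = 0) {m : M} (hYXZ : gM.g m (Y m) (lie.bracket X Z m) = 0) :
    gM.g m (cov.cov X Y m) (Z m) = -gM.g m (Y m) (cov.cov Z X m) := by
  have hmetric := cov.metric X Y Z hX hY hZ m
  rw [vfApply_of_forall_eq_zero X hYZ, ← sub_add_cancel (cov.cov X Z m) (cov.cov Z X m),
    cov.torsion_free X Z hX hZ m, gM.add_right, hYXZ] at hmetric
  linarith

end VectorField

section Submersion

variable {EM : Type*} [NormedAddCommGroup EM] [NormedSpace ℝ EM]
  {HM : Type*} [TopologicalSpace HM] {IM : ModelWithCorners ℝ EM HM}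
  {M : Type*} [TopologicalSpace M] [ChartedSpace HM M]
  {EB : Type*} [NormedAddCommGroup EB] [NormedSpace ℝ EB]
  {HB : Type*} [TopologicalSpace HB] {IB : ModelWithCorners ℝ EB HB}
  {B : Type*} [TopologicalSpace B] [ChartedSpace HB B]
  {π : M → B}

theorem vfApply_comp_of_isVerticalVF (hπ : MDifferentiable IM IB π)
    {Z : ∀ m : M, TangentSpace IM m} (hZ : IsVerticalVF IM IB π Z)
    {f : B → ℝ} (hf : MDifferentiable IB 𝓘(ℝ, ℝ) f) (m : M) :
    vfApply IM Z (f ∘ π) m = 0 := by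
  rw [vfApply, mfderiv_comp m (hf _) (hπ m)]
  exact (mfderiv IB 𝓘(ℝ, ℝ) f (π m)).congr_arg (hZ m) |>.trans (map_zero _)

theorem vfApply_comp_of_lift (hπ : MDifferentiable IM IB π)
    {X : ∀ b : B, TangentSpace IB b} {XH : ∀ m : M, TangentSpace IM m}
    (hXH : ∀ m, mfderiv IM IB π m (XH m) = X (π m))
    {f : B → ℝ} (hf : MDifferentiable IB 𝓘(ℝ, ℝ) f) :
    vfApply IM XH (f ∘ π) = vfApply IB X f ∘ π := by
  funext m
  rw [vfApply, mfderiv_comp m (hf _) (hπ m), ContinuousLinearMap.comp_apply, hXH m]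
  rfl

variable [IsManifold IM ((⊤ : ℕ∞) : WithTop ℕ∞) M] [IsManifold IB ((⊤ : ℕ∞) : WithTop ℕ∞) B]

theorem isVerticalVF_bracket_of_lift [CompactSpace B] [T2Space B] [FiniteDimensional ℝ EB]
    [IB.Boundaryless] (hπ : ContMDiff IM IB (⊤ : ℕ∞) π) (lie : LieBracketData IM M)
    {X : ∀ b : B, TangentSpace IB b} (hX : IsSmoothVF IB X)
    {XH : ∀ m : M, TangentSpace IM m} (hXHs : IsSmoothVF IM XH)
    (hXH : ∀ m, mfderiv IM IB π m (XH m) = X (π m))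
    {Z : ∀ m : M, TangentSpace IM m} (hZs : IsSmoothVF IM Z) (hZ : IsVerticalVF IM IB π Z) :
    IsVerticalVF IM IB π (lie.bracket XH Z) := by
  have hπd : MDifferentiable IM IB π := hπ.mdifferentiable (by simp)
  intro m
  refine eq_zero_of_forall_mfderiv_eq_zero fun f hf => ?_
  have hfd : MDifferentiable IB 𝓘(ℝ, ℝ) f := hf.mdifferentiable (by simp)
  rw [← ContinuousLinearMap.comp_apply, ← mfderiv_comp m (hfd _) (hπd m)]
  change vfApply IM (lie.bracket XH Z) (f ∘ π) m = 0
  rw [lie.apply_eq XH Z hXHs hZs _ (hf.comp hπ),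
    vfApply_of_forall_eq_zero XH (vfApply_comp_of_isVerticalVF hπd hZ hfd),
    vfApply_comp_of_lift hπd hXH hfd,
    vfApply_comp_of_isVerticalVF hπd hZ ((contMDiff_vfApply hX hf).mdifferentiable (by simp)),
    sub_zero]

theorem IsRiemannianSubmersion.g_horizontalLift_eq_comp {gM : RiemannianMetric IM M}
    {gB : RiemannianMetric IB B} (hπ : IsRiemannianSubmersion IM IB π gM gB)
    {X Y : ∀ b : B, TangentSpace IB b} {XH YH : ∀ m : M, TangentSpace IM m}
    (hXH : IsHorizontalLift IM IB π gM X XH) (hYH : IsHorizontalLift IM IB π gM Y YH) :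
    (fun m => gM.g m (XH m) (YH m)) = (fun b => gB.g b (X b) (Y b)) ∘ π := by
  funext m
  rw [Function.comp_apply, ← hXH.2.2 m, ← hYH.2.2 m, hπ.isometry m _ _ (hXH.2.1 m) (hYH.2.1 m)]

end Submersion

section Statement

variable {EM : Type*} [NormedAddCommGroup EM] [NormedSpace ℝ EM]
  {HM : Type*} [TopologicalSpace HM] {IM : ModelWithCorners ℝ EM HM}
  {M : Type*} [TopologicalSpace M] [ChartedSpace HM M] [IsManifold IM ((⊤ : ℕ∞) : WithTop ℕ∞) M]
  {EB : Type*} [NormedAddCommGroup EB] [NormedSpace ℝ EB]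
  {HB : Type*} [TopologicalSpace HB] {IB : ModelWithCorners ℝ EB HB}
  {B : Type*} [TopologicalSpace B] [ChartedSpace HB B] [IsManifold IB ((⊤ : ℕ∞) : WithTop ℕ∞) B]
  [IM.Boundaryless] [IB.Boundaryless] [CompactSpace M] [CompactSpace B]
  [T2Space M] [T2Space B] [FiniteDimensional ℝ EM] [FiniteDimensional ℝ EB]

theorem two_inner_levi_civita_horizontal_lifts_vertical_general
    (gM : RiemannianMetric IM M) (gB : RiemannianMetric IB B)
    (π : M → B) (hπ : IsRiemannianSubmersion IM IB π gM gB)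
    (lieM : LieBracketData IM M)
    (covM : LeviCivita gM lieM)
    (X : ∀ b : B, TangentSpace IB b) (hXsmooth : IsSmoothVF IB X)
    (Y : ∀ b : B, TangentSpace IB b) (hYsmooth : IsSmoothVF IB Y)
    (XH : ∀ m : M, TangentSpace IM m) (hXH : IsHorizontalLift IM IB π gM X XH)
    (YH : ∀ m : M, TangentSpace IM m) (hYH : IsHorizontalLift IM IB π gM Y YH)
    (Z : ∀ m : M, TangentSpace IM m) (hZsmooth : IsSmoothVF IM Z)
    (hZvert : IsVerticalVF IM IB π Z) :
    ∀ m : M, 2 * gM.g m (covM.cov XH YH m) (Z m) =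
      gM.g m (lieM.bracket XH YH m) (Z m) := by
  obtain ⟨hXHs, hXHh, hXHl⟩ := hXH
  obtain ⟨hYHs, hYHh, hYHl⟩ := hYH
  intro m
  have hXY := covM.g_cov_eq_neg_of_orthogonal hXHs hYHs hZsmooth
    (fun m => hYHh m _ (hZvert m)) (hYHh m _
      (isVerticalVF_bracket_of_lift hπ.smooth lieM hXsmooth hXHs hXHl hZsmooth hZvert m))
  have hYX := covM.g_cov_eq_neg_of_orthogonal hYHs hXHs hZsmooth
    (fun m => hXHh m _ (hZvert m)) (hXHh m _
      (isVerticalVF_bracket_of_lift hπ.smooth lieM hYsmooth hYHs hYHl hZsmooth hZvert m))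
  have hZ : gM.g m (covM.cov Z XH m) (YH m) + gM.g m (XH m) (covM.cov Z YH m) = 0 := by
    rw [← covM.metric Z XH YH hZsmooth hXHs hYHs m,
      hπ.g_horizontalLift_eq_comp ⟨hXHs, hXHh, hXHl⟩ ⟨hYHs, hYHh, hYHl⟩]
    exact vfApply_comp_of_isVerticalVF (hπ.smooth.mdifferentiable (by simp)) hZvert
      ((gB.smooth X Y hXsmooth hYsmooth).mdifferentiable (by simp)) m
  have hbracket := gM.sub_left m (covM.cov XH YH m) (covM.cov YH XH m) (Z m)
  rw [covM.torsion_free XH YH hXHs hYHs m] at hbracket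
  linarith [gM.symm m (covM.cov Z XH m) (YH m), gM.symm m (XH m) (covM.cov Z YH m)]

/-- Let `X` and `Y` be smooth vector fields on `B` with horizontal lifts `X_H`, `Y_H`
on `M`, and let `Z` be a smooth vertical vector field on `M`. Then
`2·⟪∇^M_{X_H} Y_H, Z⟫ = ⟪[X_H, Y_H], Z⟫` as functions on `M`. -/
theorem two_inner_levi_civita_horizontal_lifts_vertical
    (gM : RiemannianMetric IM M) (gB : RiemannianMetric IB B)
    (π : M → B) (hπ : IsRiemannianSubmersion IM IB π gM gB)
    (lieM : LieBracketData IM M) (lieB : LieBracketData IB B)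
    (covM : LeviCivita gM lieM) (covB : LeviCivita gB lieB)
    (X : ∀ b : B, TangentSpace IB b) (hXsmooth : IsSmoothVF IB X)
    (Y : ∀ b : B, TangentSpace IB b) (hYsmooth : IsSmoothVF IB Y)
    (XH : ∀ m : M, TangentSpace IM m) (hXH : IsHorizontalLift IM IB π gM X XH)
    (YH : ∀ m : M, TangentSpace IM m) (hYH : IsHorizontalLift IM IB π gM Y YH)
    (Z : ∀ m : M, TangentSpace IM m) (hZsmooth : IsSmoothVF IM Z)
    (hZvert : IsVerticalVF IM IB π Z) :
    ∀ m : M, 2 * gM.g m (covM.cov XH YH m) (Z m) =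
      gM.g m (lieM.bracket XH YH m) (Z m) :=
  two_inner_levi_civita_horizontal_lifts_vertical_general gM gB π hπ lieM covM X hXsmooth Y hYsmooth
    XH hXH YH hYH Z hZsmooth hZvert

end Statement
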